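/- arXiv:2111.09015 — 5 statements merged into one kernel-verified Lean document; each statement's English description precedes it below -/
import Mathlib

section
/- Fix real numbers a < b and constants A, B, c, M > 0. Suppose that for all n ≥ 1: |K_n(x,y)| ≤ A/(|x−y| + 1/n) and |K_n^{(0,1)}(x,y)| ≤ A n/(|x−y| + 1/n) for all x, y ∈ [a,b]; K_n(x,x) ≥ B n and |K_n^{(0,1)}(x,x)| ≤ M n K_n(x,x) for all x ∈ [a,b]; and v_n(t) ≥ c for all t ∈ [na, nb]. Then there is a constant C > 0, depending only on A, B, c, M, such that for all n ≥ 1 and all s, t ∈ [na, nb], |r̃'_n(s,t)| ≤ C/(|s−t| + 1). -/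
set_option autoImplicit false

open MeasureTheory Real Set

/-- `Kder p n l m x y = ∑_{j=0}^n p_j^{(l)}(x) p_j^{(m)}(y)`. -/
noncomputable def Kder (p : ℕ → Polynomial ℝ) (n l m : ℕ) (x y : ℝ) : ℝ :=
  ∑ j ∈ Finset.range (n + 1),
    (Polynomial.derivative^[l] (p j)).eval x * (Polynomial.derivative^[m] (p j)).eval y

/-- `v_n(t)`. -/
noncomputable def vFun (p : ℕ → Polynomial ℝ) (n : ℕ) (t : ℝ) : ℝ :=
  Real.sqrt ((1 / (n : ℝ) ^ 2) * (Kder p n 1 1 (t / n) (t / n) / Kder p n 0 0 (t / n) (t / n))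
    - (1 / (n : ℝ) ^ 2) * (Kder p n 0 1 (t / n) (t / n) / Kder p n 0 0 (t / n) (t / n)) ^ 2)

/-- `r̃'_n(s,t)`. -/
noncomputable def rtil' (p : ℕ → Polynomial ℝ) (n : ℕ) (s t : ℝ) : ℝ :=
  (1 / (vFun p n t * Real.sqrt (Kder p n 0 0 (s / n) (s / n) * Kder p n 0 0 (t / n) (t / n)))) *
    (Kder p n 0 1 (s / n) (t / n) / n
      - Kder p n 0 1 (t / n) (t / n) * Kder p n 0 0 (s / n) (t / n)
          / (n * Kder p n 0 0 (t / n) (t / n)))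

/-!
At scale `x = s/n`, `y = t/n` the distance `|x - y| + 1/n` equals `(|s - t| + 1)/n`, so the
off-diagonal bounds make both terms of the numerator of `r̃'_n(s,t)` of size `O(n/(|s - t| + 1))`,
the second one after using `|K_n^{(0,1)}(y,y)| ≤ M n K_n(y,y)` to cancel the `K_n(y,y)` in its
denominator. The normaliser `v_n(t) √(K_n(x,x) K_n(y,y))` is at least `c B n`, and the `n` cancels.
-/

lemma div_mem_Icc_of_mem_Icc_mul {a b s n : ℝ} (hn : 0 < n) (hs : s ∈ Icc (n * a) (n * b)) :
    s / n ∈ Icc a b :=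
  ⟨(le_div_iff₀ hn).2 (mul_comm a n ▸ hs.1), (div_le_iff₀ hn).2 (mul_comm b n ▸ hs.2)⟩

lemma abs_div_sub_div_add_one_div {s t n : ℝ} (hn : 0 < n) :
    |s / n - t / n| + 1 / n = (|s - t| + 1) / n := by
  rw [div_sub_div_same, abs_div, abs_of_pos hn, ← add_div]

lemma le_sqrt_mul_of_le_of_le {m x y : ℝ} (hm : 0 ≤ m) (hx : m ≤ x) (hy : m ≤ y) :
    m ≤ √(x * y) :=
  Real.le_sqrt_of_sq_le (sq m ▸ mul_le_mul hx hy hm (hm.trans hx))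

lemma abs_div_sub_mul_div_le {u w d e n α β M : ℝ} (hn : 0 < n) (he : 0 < e)
    (hu : |u| ≤ n * α) (hd : |d| ≤ M * n * e) (hw : |w| ≤ β) :
    |u / n - d * w / (n * e)| ≤ α + M * β := by
  have hne : 0 < n * e := mul_pos hn he
  have hfirst : |u / n| ≤ α := by
    rw [abs_div, abs_of_pos hn, div_le_iff₀ hn, mul_comm]; exact hu
  have hratio : |d / (n * e)| ≤ M := by
    rw [abs_div, abs_of_pos hne, div_le_iff₀ hne, ← mul_assoc]; exact hd
  have hsecond : |d * w / (n * e)| ≤ M * β := by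
    rw [mul_div_right_comm, abs_mul]
    exact mul_le_mul hratio hw (abs_nonneg w) ((abs_nonneg _).trans hratio)
  calc |u / n - d * w / (n * e)| ≤ |u / n| + |d * w / (n * e)| := abs_sub _ _
    _ ≤ α + M * β := add_le_add hfirst hsecond

lemma abs_rtil'_le {p : ℕ → Polynomial ℝ} {n : ℕ} {s t α β M m c : ℝ} (hn : 0 < (n : ℝ))
    (hm : 0 < m) (hc : 0 < c)
    (h01 : |Kder p n 0 1 (s / n) (t / n)| ≤ n * α)
    (h00 : |Kder p n 0 0 (s / n) (t / n)| ≤ β)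
    (h01diag : |Kder p n 0 1 (t / n) (t / n)| ≤ M * n * Kder p n 0 0 (t / n) (t / n))
    (hxx : m ≤ Kder p n 0 0 (s / n) (s / n)) (hyy : m ≤ Kder p n 0 0 (t / n) (t / n))
    (hv : c ≤ vFun p n t) :
    |rtil' p n s t| ≤ (α + M * β) / (c * m) := by
  have hnormaliser : c * m ≤ vFun p n t *
      √(Kder p n 0 0 (s / n) (s / n) * Kder p n 0 0 (t / n) (t / n)) :=
    mul_le_mul hv (le_sqrt_mul_of_le_of_le hm.le hxx hyy) hm.le (hc.le.trans hv)
  have hnumerator := abs_div_sub_mul_div_le hn (hm.trans_le hyy) h01 h01diag h00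
  have hcm : 0 < c * m := mul_pos hc hm
  rw [rtil', one_div_mul_eq_div, abs_div, abs_of_pos (hcm.trans_le hnormaliser)]
  exact div_le_div₀ ((abs_nonneg _).trans hnumerator) hnumerator hcm hnormaliser

theorem rtil'_decay_general (a b : ℝ) (A B c M : ℝ)
    (hA : 0 < A) (hB : 0 < B) (hc : 0 < c) (hM : 0 < M)
    (p : ℕ → Polynomial ℝ)
    (hK00 : ∀ n : ℕ, 1 ≤ n → ∀ x ∈ Set.Icc a b, ∀ y ∈ Set.Icc a b,
      |Kder p n 0 0 x y| ≤ A / (|x - y| + 1 / n))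
    (hK01 : ∀ n : ℕ, 1 ≤ n → ∀ x ∈ Set.Icc a b, ∀ y ∈ Set.Icc a b,
      |Kder p n 0 1 x y| ≤ A * n / (|x - y| + 1 / n))
    (hKdiag : ∀ n : ℕ, 1 ≤ n → ∀ x ∈ Set.Icc a b, Kder p n 0 0 x x ≥ B * n)
    (hK01diag : ∀ n : ℕ, 1 ≤ n → ∀ x ∈ Set.Icc a b,
      |Kder p n 0 1 x x| ≤ M * n * Kder p n 0 0 x x)
    (hv : ∀ n : ℕ, 1 ≤ n → ∀ t ∈ Set.Icc ((n : ℝ) * a) ((n : ℝ) * b), c ≤ vFun p n t) :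
    ∃ C : ℝ, 0 < C ∧ ∀ n : ℕ, 1 ≤ n → ∀ s ∈ Set.Icc ((n : ℝ) * a) ((n : ℝ) * b),
      ∀ t ∈ Set.Icc ((n : ℝ) * a) ((n : ℝ) * b),
        |rtil' p n s t| ≤ C / (|s - t| + 1) := by
  refine ⟨A * (1 + M) / (c * B), by positivity, fun n hn s hs t ht => ?_⟩
  have hn0 : (0 : ℝ) < n := by exact_mod_cast hn
  have hx := div_mem_Icc_of_mem_Icc_mul hn0 hs
  have hy := div_mem_Icc_of_mem_Icc_mul hn0 ht
  have hdist := abs_div_sub_div_add_one_div (s := s) (t := t) hn0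
  have h01 : |Kder p n 0 1 (s / n) (t / n)| ≤ n * (A * n / (|s - t| + 1)) := by
    refine (hK01 n hn _ hx _ hy).trans_eq ?_
    rw [hdist]; field_simp
  have h00 : |Kder p n 0 0 (s / n) (t / n)| ≤ A * n / (|s - t| + 1) := by
    refine (hK00 n hn _ hx _ hy).trans_eq ?_
    rw [hdist, div_div_eq_mul_div]
  calc |rtil' p n s t|
      ≤ (A * n / (|s - t| + 1) + M * (A * n / (|s - t| + 1))) / (c * (B * n)) :=
        abs_rtil'_le hn0 (by positivity) hc h01 h00 (hK01diag n hn _ hy)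
          (hKdiag n hn _ hx) (hKdiag n hn _ hy) (hv n hn t ht)
    _ = A * (1 + M) / (c * B) / (|s - t| + 1) := by field_simp

theorem rtil'_decay (a b : ℝ) (hab : a < b) (A B c M : ℝ)
    (hA : 0 < A) (hB : 0 < B) (hc : 0 < c) (hM : 0 < M)
    (p : ℕ → Polynomial ℝ)
    (hK00 : ∀ n : ℕ, 1 ≤ n → ∀ x ∈ Set.Icc a b, ∀ y ∈ Set.Icc a b,
      |Kder p n 0 0 x y| ≤ A / (|x - y| + 1 / n))
    (hK01 : ∀ n : ℕ, 1 ≤ n → ∀ x ∈ Set.Icc a b, ∀ y ∈ Set.Icc a b,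
      |Kder p n 0 1 x y| ≤ A * n / (|x - y| + 1 / n))
    (hKdiag : ∀ n : ℕ, 1 ≤ n → ∀ x ∈ Set.Icc a b, Kder p n 0 0 x x ≥ B * n)
    (hK01diag : ∀ n : ℕ, 1 ≤ n → ∀ x ∈ Set.Icc a b,
      |Kder p n 0 1 x x| ≤ M * n * Kder p n 0 0 x x)
    (hv : ∀ n : ℕ, 1 ≤ n → ∀ t ∈ Set.Icc ((n : ℝ) * a) ((n : ℝ) * b), c ≤ vFun p n t) :
    ∃ C : ℝ, 0 < C ∧ ∀ n : ℕ, 1 ≤ n → ∀ s ∈ Set.Icc ((n : ℝ) * a) ((n : ℝ) * b),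
      ∀ t ∈ Set.Icc ((n : ℝ) * a) ((n : ℝ) * b),
        |rtil' p n s t| ≤ C / (|s - t| + 1) :=
  rtil'_decay_general a b A B c M hA hB hc hM p hK00 hK01 hKdiag hK01diag hv
end

section
/- Fix real numbers a < b, a positive integer k, and constants M, B > 0. Suppose that for all n ≥ 1, all integers 0 ≤ l, m ≤ k, and all t ∈ [na, nb], one has |K_n^{(l,m)}(t/n, t/n)| ≤ M n^{l+m+1} and K_n(t/n, t/n) ≥ B n. For t ∈ [na, nb] define q_j(t) = p_j(t/n)/√(K_n(t/n, t/n)). Then there exists a constant C_k > 0, depending only on k, a, b, M, B (not on n), such that Σ_{j=0}^n (q_j^{(k)}(t))² ≤ C_k for all n ≥ 1 and all t ∈ [na, nb]. -/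
/-!
Write `q_j = f_j * w` with `f_j u = p_j (u / n)` and `w = K^(-1/2)`, `K = ∑ j, f_j ^ 2`.
Rescaling gives `∑ j, (f_j^(i) t) ^ 2 = n^(-2i) K_n^(i,i)(t/n, t/n) ≤ M n` for `i ≤ k`, and Leibniz's
rule then bounds every `|K^(i) t|` by `2^i M n`. So `K / n` is at least `B` at `t` and has derivatives
bounded independently of `n`; Faà di Bruno's bound for `y ↦ y^(-1/2)` gives `|w^(r) t| ≤ D / √n`.
Leibniz's rule and Cauchy–Schwarz finally give `∑ j, (q_j^(k) t) ^ 2 ≤ 4^k (D / √n)^2 · M n = 4^k D^2 M`.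
-/

set_option autoImplicit false

open MeasureTheory Real Set

open Finset Polynomial
open scoped Nat

namespace Polynomial

variable {𝕜 : Type*} [NontriviallyNormedField 𝕜]

theorem iteratedDeriv_eval (P : 𝕜[X]) (i : ℕ) :
    iteratedDeriv i (fun x => P.eval x) = fun x => (derivative^[i] P).eval x := by
  induction i generalizing P with
  | zero => simp
  | succ i ih =>
    rw [iteratedDeriv_succ', Function.iterate_succ_apply]
    have hderiv : _root_.deriv (fun x => P.eval x) = fun x => P.derivative.eval x :=
      _root_.funext fun _ => P.deriv
    rw [hderiv, ih]

theorem contDiff_eval (P : 𝕜[X]) {n : WithTop ℕ∞} : ContDiff 𝕜 n fun x => P.eval x := by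
  simpa using P.contDiff_aeval (𝕜 := 𝕜) n

theorem iteratedDeriv_eval_div (P : 𝕜[X]) (i : ℕ) (c t : 𝕜) :
    iteratedDeriv i (fun u => P.eval (u / c)) t = c⁻¹ ^ i * (derivative^[i] P).eval (t / c) := by
  simp_rw [div_eq_inv_mul, iteratedDeriv_comp_const_mul P.contDiff_eval, P.iteratedDeriv_eval]

end Polynomial

theorem sum_sq_iteratedDeriv_eval_div (p : ℕ → ℝ[X]) (n i : ℕ) (t : ℝ) :
    ∑ j ∈ range (n + 1), (iteratedDeriv i (fun u => (p j).eval (u / (n : ℝ))) t) ^ 2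
      = ((n : ℝ)⁻¹) ^ (2 * i) * Kder p n i i (t / n) (t / n) := by
  simp_rw [Polynomial.iteratedDeriv_eval_div, Kder, mul_sum]
  exact sum_congr rfl fun j _ => by ring

theorem sum_sq_iteratedDeriv_eval_div_le {p : ℕ → ℝ[X]} {n i : ℕ} {t M : ℝ} (hn : (0 : ℝ) < n)
    (hK : |Kder p n i i (t / n) (t / n)| ≤ M * (n : ℝ) ^ (i + i + 1)) :
    ∑ j ∈ range (n + 1), (iteratedDeriv i (fun u => (p j).eval (u / (n : ℝ))) t) ^ 2 ≤ M * n := by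
  rw [sum_sq_iteratedDeriv_eval_div]
  calc _ ≤ ((n : ℝ)⁻¹) ^ (2 * i) * (M * (n : ℝ) ^ (i + i + 1)) := by
        gcongr
        exact (le_abs_self _).trans hK
    _ = M * n := by
        rw [inv_pow, show i + i + 1 = 2 * i + 1 by ring, pow_succ]
        field_simp

theorem Nat.cast_sum_range_choose (R : Type*) [Semiring R] (n : ℕ) :
    ∑ m ∈ range (n + 1), (n.choose m : R) = 2 ^ n := by
  simpa using congrArg (Nat.cast (R := R)) (Nat.sum_range_choose n)

theorem abs_iteratedDeriv_rpow_le {B y p : ℝ} (hB : 0 < B) (hBy : B ≤ y) (hp : p ≤ 0) (i : ℕ) :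
    |iteratedDeriv i (fun x => x ^ p) y| ≤ |(descPochhammer ℝ i).eval p| * B ^ (p - i) := by
  rw [iteratedDeriv_eq_iterate, iter_deriv_rpow_const, abs_mul,
    abs_of_pos (rpow_pos_of_pos (hB.trans_le hBy) _)]
  exact mul_le_mul_of_nonneg_left
    (rpow_le_rpow_of_nonpos hB hBy (by linarith [(Nat.cast_nonneg i : (0 : ℝ) ≤ i)])) (abs_nonneg _)

theorem exists_abs_iteratedDeriv_inv_sqrt_le (k : ℕ) {B : ℝ} (E : ℝ) (hB : 0 < B) :
    ∃ D, 0 < D ∧ ∀ (f : ℝ → ℝ) (t : ℝ), ContDiff ℝ k f → B ≤ f t →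
      (∀ i ≤ k, 1 ≤ i → |iteratedDeriv i f t| ≤ E) →
      ∀ r ≤ k, |iteratedDeriv r (fun x => (√(f x))⁻¹) t| ≤ D := by
  set g : ℝ → ℝ := fun y => y ^ (-(1 / 2) : ℝ)
  set c : ℕ → ℝ := fun i => |(descPochhammer ℝ i).eval (-(1 / 2))| * B ^ (-(1 / 2) - i : ℝ)
  have hc : ∀ i, 0 ≤ c i := fun i => by positivity
  set Cg := ∑ i ∈ range (k + 1), c i
  have hCg : 0 < Cg := by
    refine lt_of_lt_of_le ?_ (single_le_sum (fun i _ => hc i) (mem_range.mpr k.succ_pos))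
    simpa [c] using rpow_pos_of_pos hB _
  set E' := max E 1
  refine ⟨k ! * Cg * E' ^ k, by positivity, fun f t hf hBf hE r hr => ?_⟩
  have hft : 0 < f t := hB.trans_le hBf
  set U := f ⁻¹' Ioi 0
  have hU : IsOpen U := isOpen_Ioi.preimage hf.continuous
  have htU : t ∈ U := hft
  have hg : ContDiffOn ℝ k g (Ioi 0) := fun y hy =>
    (contDiffAt_rpow_const_of_ne (ne_of_gt hy)).contDiffWithinAt
  have hgbound : ∀ i ≤ r, ‖iteratedFDerivWithin ℝ i g (Ioi 0) (f t)‖ ≤ Cg := by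
    intro i hi
    rw [iteratedFDerivWithin_of_isOpen i isOpen_Ioi hft, norm_iteratedFDeriv_eq_norm_iteratedDeriv,
      Real.norm_eq_abs]
    calc _ ≤ c i := abs_iteratedDeriv_rpow_le hB hBf (by norm_num) i
      _ ≤ Cg := single_le_sum (fun i _ => hc i) (mem_range.mpr (by omega))
  have hfbound : ∀ i, 1 ≤ i → i ≤ r → ‖iteratedFDerivWithin ℝ i f U t‖ ≤ E' ^ i := by
    intro i hi1 hi
    rw [iteratedFDerivWithin_of_isOpen i hU htU, norm_iteratedFDeriv_eq_norm_iteratedDeriv,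
      Real.norm_eq_abs]
    exact (hE i (hi.trans hr) hi1).trans
      ((le_max_left E 1).trans (le_self_pow₀ (le_max_right E 1) (by omega)))
  have hcomp := norm_iteratedFDerivWithin_comp_le hg hf.contDiffOn (by exact_mod_cast hr)
    (uniqueDiffOn_Ioi 0) hU.uniqueDiffOn (fun x hx => hx) htU hgbound hfbound
  have hev : (fun x => (√(f x))⁻¹) =ᶠ[nhds t] g ∘ f := by
    filter_upwards [hU.mem_nhds htU] with x hx
    simp [g, sqrt_eq_rpow, rpow_neg (le_of_lt hx)]
  rw [hev.iteratedDeriv_eq, ← Real.norm_eq_abs, ← norm_iteratedFDeriv_eq_norm_iteratedDeriv,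
    ← iteratedFDerivWithin_of_isOpen r hU htU]
  calc _ ≤ r ! * Cg * E' ^ r := hcomp
    _ ≤ k ! * Cg * E' ^ k := by
        gcongr
        exact le_max_right E 1

section

variable {ι : Type*}

theorem abs_iteratedDeriv_sum_mul_self_le (s : Finset ι) (f : ι → ℝ → ℝ) {i : ℕ}
    {t S : ℝ} (hf : ∀ j ∈ s, ContDiffAt ℝ i (f j) t)
    (hS : ∀ l ≤ i, ∑ j ∈ s, (iteratedDeriv l (f j) t) ^ 2 ≤ S) :
    |iteratedDeriv i (fun x => ∑ j ∈ s, f j x * f j x) t| ≤ 2 ^ i * S := by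
  rw [iteratedDeriv_fun_sum fun j hj => (hf j hj).mul (hf j hj)]
  set a : ι → ℕ → ℝ := fun j l => iteratedDeriv l (f j) t
  have hprod : ∀ l ≤ i, ∀ m ≤ i, |∑ j ∈ s, a j l * a j m| ≤ S := by
    intro l hl m hm
    refine (abs_sum_le_sum_abs _ _).trans ?_
    calc ∑ j ∈ s, |a j l * a j m| ≤ ∑ j ∈ s, (a j l ^ 2 + a j m ^ 2) / 2 :=
          sum_le_sum fun j _ => by
            nlinarith [sq_nonneg (|a j l| - |a j m|), sq_abs (a j l), sq_abs (a j m),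
              abs_mul (a j l) (a j m)]
      _ ≤ (S + S) / 2 := by
          rw [← sum_div, sum_add_distrib]
          gcongr
          exacts [hS l hl, hS m hm]
      _ = S := by ring
  calc |∑ j ∈ s, iteratedDeriv i (fun x => f j x * f j x) t|
      = |∑ l ∈ range (i + 1), (i.choose l : ℝ) * ∑ j ∈ s, a j l * a j (i - l)| := by
        rw [sum_congr rfl fun j hj => iteratedDeriv_fun_mul (hf j hj) (hf j hj), sum_comm]
        simp_rw [mul_sum, mul_assoc]
        rfl
    _ ≤ ∑ l ∈ range (i + 1), (i.choose l : ℝ) * S := by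
        refine (abs_sum_le_sum_abs _ _).trans (sum_le_sum fun l hl => ?_)
        rw [abs_mul, Nat.abs_cast]
        have hl : l ≤ i := Nat.lt_succ_iff.mp (mem_range.mp hl)
        exact mul_le_mul_of_nonneg_left (hprod l hl _ (Nat.sub_le i l)) (Nat.cast_nonneg _)
    _ = 2 ^ i * S := by
        rw [← sum_mul, Nat.cast_sum_range_choose]

theorem sum_sq_iteratedDeriv_mul_le (s : Finset ι) (f : ι → ℝ → ℝ) (w : ℝ → ℝ)
    {k : ℕ} {t W S : ℝ} (hf : ∀ j ∈ s, ContDiffAt ℝ k (f j) t) (hw : ContDiffAt ℝ k w t)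
    (hW : ∀ r ≤ k, |iteratedDeriv r w t| ≤ W)
    (hS : ∀ i ≤ k, ∑ j ∈ s, (iteratedDeriv i (f j) t) ^ 2 ≤ S) :
    ∑ j ∈ s, (iteratedDeriv k (fun x => f j x * w x) t) ^ 2 ≤ 4 ^ k * W ^ 2 * S := by
  have hW0 : 0 ≤ W := (abs_nonneg _).trans (hW 0 (Nat.zero_le _))
  set a : ι → ℕ → ℝ := fun j i => iteratedDeriv i (f j) t
  have hterm : ∀ j ∈ s, (iteratedDeriv k (fun x => f j x * w x) t) ^ 2
      ≤ W ^ 2 * (2 ^ k * ∑ i ∈ range (k + 1), (k.choose i : ℝ) * a j i ^ 2) := by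
    intro j hj
    have hleibniz : |iteratedDeriv k (fun x => f j x * w x) t|
        ≤ W * ∑ i ∈ range (k + 1), (k.choose i : ℝ) * |a j i| := by
      rw [iteratedDeriv_fun_mul (hf j hj) hw, mul_sum]
      refine (abs_sum_le_sum_abs _ _).trans (sum_le_sum fun i hi => ?_)
      rw [abs_mul, abs_mul, Nat.abs_cast, mul_comm W]
      exact mul_le_mul_of_nonneg_left (hW (k - i) (Nat.sub_le k i)) (by positivity)
    have hcs : (∑ i ∈ range (k + 1), (k.choose i : ℝ) * |a j i|) ^ 2
        ≤ (∑ i ∈ range (k + 1), (k.choose i : ℝ)) *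
          ∑ i ∈ range (k + 1), (k.choose i : ℝ) * a j i ^ 2 :=
      sum_sq_le_sum_mul_sum_of_sq_le_mul _ (fun i _ => by positivity) (fun i _ => by positivity)
        fun i _ => le_of_eq (by rw [mul_pow, sq_abs]; ring)
    rw [Nat.cast_sum_range_choose] at hcs
    calc (iteratedDeriv k (fun x => f j x * w x) t) ^ 2
        = |iteratedDeriv k (fun x => f j x * w x) t| ^ 2 := (sq_abs _).symm
      _ ≤ (W * ∑ i ∈ range (k + 1), (k.choose i : ℝ) * |a j i|) ^ 2 := by gcongr
      _ ≤ W ^ 2 * (2 ^ k * ∑ i ∈ range (k + 1), (k.choose i : ℝ) * a j i ^ 2) := by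
        rw [mul_pow]; gcongr
  calc ∑ j ∈ s, (iteratedDeriv k (fun x => f j x * w x) t) ^ 2
      ≤ ∑ j ∈ s, W ^ 2 * (2 ^ k * ∑ i ∈ range (k + 1), (k.choose i : ℝ) * a j i ^ 2) :=
        sum_le_sum hterm
    _ = W ^ 2 * 2 ^ k * ∑ i ∈ range (k + 1), (k.choose i : ℝ) * ∑ j ∈ s, a j i ^ 2 := by
        simp only [mul_sum, mul_assoc]
        exact sum_comm
    _ ≤ W ^ 2 * 2 ^ k * ∑ i ∈ range (k + 1), (k.choose i : ℝ) * S := by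
        gcongr with i hi
        exact hS i (Nat.lt_succ_iff.mp (mem_range.mp hi))
    _ = 4 ^ k * W ^ 2 * S := by
        rw [← sum_mul, Nat.cast_sum_range_choose, show (4 : ℝ) ^ k = 2 ^ k * 2 ^ k by
          rw [← mul_pow]; norm_num]
        ring

variable {k : ℕ} {M B : ℝ}

theorem exists_abs_iteratedDeriv_inv_sqrt_sum_mul_self_le (hB : 0 < B) :
    ∃ D, 0 < D ∧ ∀ (s : Finset ι) (f : ι → ℝ → ℝ) (t N : ℝ), 0 < N →
      (∀ j ∈ s, ContDiff ℝ k (f j)) →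
      (∀ i ≤ k, ∑ j ∈ s, (iteratedDeriv i (f j) t) ^ 2 ≤ M * N) →
      B * N ≤ ∑ j ∈ s, f j t * f j t →
      ∀ r ≤ k, |iteratedDeriv r (fun x => (√(∑ j ∈ s, f j x * f j x))⁻¹) t| ≤ D / √N := by
  obtain ⟨D, hD, hinv⟩ := exists_abs_iteratedDeriv_inv_sqrt_le k (2 ^ k * M) hB
  refine ⟨D, hD, fun s f t N hN hf hS hlow r hr => ?_⟩
  set F : ℝ → ℝ := fun x => ∑ j ∈ s, f j x * f j x
  have hFsmooth : ContDiff ℝ k F := ContDiff.sum fun j hj => (hf j hj).mul (hf j hj)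
  have hFderiv : ∀ i ≤ k, 1 ≤ i → |iteratedDeriv i (fun x => F x / N) t| ≤ 2 ^ k * M := by
    intro i hi _
    rw [iteratedDeriv_div_const, abs_div, abs_of_pos hN, div_le_iff₀ hN]
    calc _ ≤ 2 ^ i * (M * N) := abs_iteratedDeriv_sum_mul_self_le _ _
          (fun j hj => (hf j hj).contDiffAt.of_le (by exact_mod_cast hi))
          fun l hl => hS l (hl.trans hi)
      _ ≤ 2 ^ k * (M * N) := by
        have hMN : 0 ≤ M * N := (hS 0 (Nat.zero_le k)).trans' (sum_nonneg fun j _ => sq_nonneg _)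
        exact mul_le_mul_of_nonneg_right (pow_le_pow_right₀ one_le_two hi) hMN
      _ = 2 ^ k * M * N := (mul_assoc _ _ _).symm
  have hscale : (fun x => (√(F x))⁻¹) = fun x => (√N)⁻¹ * (√(F x / N))⁻¹ := by
    funext x; rw [sqrt_div' _ hN.le, inv_div]; field_simp
  rw [hscale, iteratedDeriv_const_mul_field, abs_mul, abs_inv, abs_of_pos (sqrt_pos.mpr hN),
    inv_mul_le_iff₀ (sqrt_pos.mpr hN), mul_div_cancel₀ _ (sqrt_pos.mpr hN).ne']
  exact hinv _ t (hFsmooth.div_const _) ((le_div_iff₀ hN).mpr hlow) hFderiv r hr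

theorem exists_sum_sq_iteratedDeriv_div_sqrt_sum_mul_self_le (hM : 0 < M) (hB : 0 < B) :
    ∃ C, 0 < C ∧ ∀ (s : Finset ι) (f : ι → ℝ → ℝ) (t N : ℝ), 0 < N →
      (∀ j ∈ s, ContDiff ℝ k (f j)) →
      (∀ i ≤ k, ∑ j ∈ s, (iteratedDeriv i (f j) t) ^ 2 ≤ M * N) →
      B * N ≤ ∑ j ∈ s, f j t * f j t →
      ∑ j ∈ s, (iteratedDeriv k (fun x => f j x / √(∑ i ∈ s, f i x * f i x)) t) ^ 2 ≤ C := by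
  obtain ⟨D, hD, hw⟩ := exists_abs_iteratedDeriv_inv_sqrt_sum_mul_self_le (ι := ι) (k := k) (M := M) hB
  refine ⟨4 ^ k * D ^ 2 * M, by positivity, fun s f t N hN hf hS hlow => ?_⟩
  have hFpos : 0 < ∑ j ∈ s, f j t * f j t := (mul_pos hB hN).trans_le hlow
  have hwsmooth : ContDiffAt ℝ k (fun x => (√(∑ j ∈ s, f j x * f j x))⁻¹) t :=
    ((ContDiff.sum fun j hj => (hf j hj).mul (hf j hj)).contDiffAt.sqrt hFpos.ne').inv
      (sqrt_pos.mpr hFpos).ne'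
  simp only [div_eq_mul_inv]
  calc _ ≤ 4 ^ k * (D / √N) ^ 2 * (M * N) := sum_sq_iteratedDeriv_mul_le _ _ _
        (fun j hj => (hf j hj).contDiffAt) hwsmooth (hw s f t N hN hf hS hlow) hS
    _ = 4 ^ k * D ^ 2 * M := by
        rw [div_pow, sq_sqrt hN.le]; field_simp

end

theorem sum_sq_iteratedDeriv_q_bounded_general (a b : ℝ) (k : ℕ)
    (M B : ℝ) (hM : 0 < M) (hB : 0 < B) (p : ℕ → Polynomial ℝ)
    (hup : ∀ n : ℕ, 1 ≤ n → ∀ l ≤ k, ∀ m ≤ k, ∀ t ∈ Set.Icc ((n : ℝ) * a) ((n : ℝ) * b),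
      |Kder p n l m (t / n) (t / n)| ≤ M * (n : ℝ) ^ (l + m + 1))
    (hlow : ∀ n : ℕ, 1 ≤ n → ∀ t ∈ Set.Icc ((n : ℝ) * a) ((n : ℝ) * b),
      Kder p n 0 0 (t / n) (t / n) ≥ B * n) :
    ∃ C : ℝ, 0 < C ∧ ∀ n : ℕ, 1 ≤ n → ∀ t ∈ Set.Icc ((n : ℝ) * a) ((n : ℝ) * b),
      ∑ j ∈ Finset.range (n + 1),
        (iteratedDeriv k
            (fun u : ℝ => (p j).eval (u / (n : ℝ)) / Real.sqrt (Kder p n 0 0 (u / (n : ℝ)) (u / (n : ℝ)))) t) ^ 2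
        ≤ C := by
  obtain ⟨C, hC, hbound⟩ := exists_sum_sq_iteratedDeriv_div_sqrt_sum_mul_self_le (ι := ℕ) hM hB
  refine ⟨C, hC, fun n hn t ht => ?_⟩
  have hn0 : (0 : ℝ) < n := by exact_mod_cast hn
  have hS : ∀ i ≤ k, ∑ j ∈ range (n + 1), (iteratedDeriv i (fun u => (p j).eval (u / (n : ℝ))) t) ^ 2
      ≤ M * n := fun i hi => sum_sq_iteratedDeriv_eval_div_le hn0 (hup n hn i hi i hi t ht)
  have hlow' := hlow n hn t ht
  simp only [Kder, Function.iterate_zero_apply] at hlow' ⊢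
  exact hbound _ _ t n hn0 (fun j _ => (p j).contDiff_eval.comp (contDiff_id.div_const _)) hS hlow'

theorem sum_sq_iteratedDeriv_q_bounded (a b : ℝ) (hab : a < b) (k : ℕ) (hk : 1 ≤ k)
    (M B : ℝ) (hM : 0 < M) (hB : 0 < B) (p : ℕ → Polynomial ℝ)
    (hup : ∀ n : ℕ, 1 ≤ n → ∀ l ≤ k, ∀ m ≤ k, ∀ t ∈ Set.Icc ((n : ℝ) * a) ((n : ℝ) * b),
      |Kder p n l m (t / n) (t / n)| ≤ M * (n : ℝ) ^ (l + m + 1))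
    (hlow : ∀ n : ℕ, 1 ≤ n → ∀ t ∈ Set.Icc ((n : ℝ) * a) ((n : ℝ) * b),
      Kder p n 0 0 (t / n) (t / n) ≥ B * n) :
    ∃ C : ℝ, 0 < C ∧ ∀ n : ℕ, 1 ≤ n → ∀ t ∈ Set.Icc ((n : ℝ) * a) ((n : ℝ) * b),
      ∑ j ∈ Finset.range (n + 1),
        (iteratedDeriv k
            (fun u : ℝ => (p j).eval (u / (n : ℝ)) / Real.sqrt (Kder p n 0 0 (u / (n : ℝ)) (u / (n : ℝ)))) t) ^ 2
        ≤ C :=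
  sum_sq_iteratedDeriv_q_bounded_general a b k M B hM hB p hup hlow
end

section
/- For all real numbers a < b and every integer n ≥ 1, ∫_{na}^{nb} ∫_{na}^{nb} ∫_{na}^{nb} ∫_{na}^{nb} 1/((|s−t|+1)(|t−t'|+1)(|t'−s'|+1)) ds dt ds' dt' ≤ 8 n (b−a) (log(1 + n(b−a)))³. -/
set_option autoImplicit false

open MeasureTheory Real Set

/-!
Let `I = [na, nb]` and `k x y = (|x - y| + 1)⁻¹`. Splitting `I` at `x` and using
`∫ u in 0..q, (|u| + 1)⁻¹ = log (1 + q)` gives `∫ y in I, k x y ≤ 2 log (1 + |I|)` for `x ∈ I`.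
After swapping the `s'` and `t'` integrals the integrand is the chain `k s t * k t t' * k t' s'`,
so integrating out `s'`, `t'`, `t` costs a factor `2 log (1 + |I|)` each and the `s` integral
costs `|I| = n (b - a)`.
-/

lemma continuous_inv_abs_add_one : Continuous fun u : ℝ => (|u| + 1)⁻¹ :=
  (continuous_abs.add continuous_const).inv₀ fun u => (by positivity : |u| + 1 ≠ 0)

lemma integral_inv_abs_add_one_of_nonneg {q : ℝ} (hq : 0 ≤ q) :
    ∫ u in (0 : ℝ)..q, (|u| + 1)⁻¹ = log (1 + q) := by
  have hcongr : EqOn (fun u : ℝ => (|u| + 1)⁻¹) (fun u => (1 + u)⁻¹) (uIcc 0 q) := by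
    intro u hu
    rw [uIcc_of_le hq] at hu
    simp only [abs_of_nonneg hu.1, add_comm]
  rw [intervalIntegral.integral_congr hcongr,
    intervalIntegral.integral_comp_add_left (fun u => u⁻¹), integral_inv_of_pos (by norm_num)
      (by linarith), add_zero, div_one]

lemma integral_inv_abs_add_one_of_nonpos_of_nonneg {p q : ℝ} (hp : p ≤ 0) (hq : 0 ≤ q) :
    ∫ u in p..q, (|u| + 1)⁻¹ = log (1 - p) + log (1 + q) := by
  have hint : ∀ a b : ℝ, IntervalIntegrable (fun u : ℝ => (|u| + 1)⁻¹) volume a b :=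
    continuous_inv_abs_add_one.intervalIntegrable
  have hleft : ∫ u in p..0, (|u| + 1)⁻¹ = log (1 - p) := by
    simpa only [abs_neg, neg_zero, neg_neg, ← sub_eq_add_neg,
      integral_inv_abs_add_one_of_nonneg (neg_nonneg.2 hp)] using
      (intervalIntegral.integral_comp_neg (a := 0) (b := -p) fun u : ℝ => (|u| + 1)⁻¹).symm
  rw [← intervalIntegral.integral_add_adjacent_intervals (hint _ 0) (hint 0 _), hleft,
    integral_inv_abs_add_one_of_nonneg hq]

lemma setIntegral_Icc_inv_abs_sub_add_one_le {c d x : ℝ} (hx : x ∈ Icc c d) :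
    ∫ y in Icc c d, (|x - y| + 1)⁻¹ ≤ 2 * log (1 + (d - c)) := by
  obtain ⟨hcx, hxd⟩ := hx
  have hsplit : ∫ y in Icc c d, (|x - y| + 1)⁻¹ = log (1 - (c - x)) + log (1 + (d - x)) := by
    simp only [abs_sub_comm x]
    rw [integral_Icc_eq_integral_Ioc, ← intervalIntegral.integral_of_le (hcx.trans hxd),
      intervalIntegral.integral_comp_sub_right (fun u => (|u| + 1)⁻¹)]
    exact integral_inv_abs_add_one_of_nonpos_of_nonneg (by linarith) (by linarith)
  rw [hsplit]
  have hl : log (1 - (c - x)) ≤ log (1 + (d - c)) := log_le_log (by linarith) (by linarith)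
  have hr : log (1 + (d - x)) ≤ log (1 + (d - c)) := log_le_log (by linarith) (by linarith)
  linarith

lemma setIntegral_Icc_inv_abs_sub_add_one_mul_le {c d x M : ℝ} {g : ℝ → ℝ} (hx : x ∈ Icc c d)
    (hg0 : ∀ y ∈ Icc c d, 0 ≤ g y) (hgM : ∀ y ∈ Icc c d, g y ≤ M) :
    ∫ y in Icc c d, (|x - y| + 1)⁻¹ * g y ≤ 2 * log (1 + (d - c)) * M := by
  -- `g` need not be integrable: `integral_mono_of_nonneg` only asks it of the upper bound.
  have hM : 0 ≤ M := (hg0 x hx).trans (hgM x hx)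
  calc ∫ y in Icc c d, (|x - y| + 1)⁻¹ * g y
      ≤ ∫ y in Icc c d, (|x - y| + 1)⁻¹ * M := by
        refine integral_mono_of_nonneg ?_ ?_ ?_
        · filter_upwards [ae_restrict_mem measurableSet_Icc] with y hy
          exact mul_nonneg (by positivity) (hg0 y hy)
        · exact ((continuous_inv_abs_add_one.comp (continuous_const.sub continuous_id)).mul
            continuous_const).integrableOn_Icc
        · filter_upwards [ae_restrict_mem measurableSet_Icc] with y hy
          exact mul_le_mul_of_nonneg_left (hgM y hy) (by positivity)
    _ = (∫ y in Icc c d, (|x - y| + 1)⁻¹) * M := integral_mul_const _ _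
    _ ≤ 2 * log (1 + (d - c)) * M :=
        mul_le_mul_of_nonneg_right (setIntegral_Icc_inv_abs_sub_add_one_le hx) hM

lemma setIntegral_Icc_comm_of_continuous {f : ℝ → ℝ → ℝ} (hf : Continuous (Function.uncurry f))
    (c d c' d' : ℝ) :
    ∫ x in Icc c d, ∫ y in Icc c' d', f x y = ∫ y in Icc c' d', ∫ x in Icc c d, f x y := by
  refine integral_integral_swap ?_
  rw [Measure.prod_restrict]
  exact hf.continuousOn.integrableOn_compact (isCompact_Icc.prod isCompact_Icc)

theorem quadruple_integral_bound_general (a b : ℝ) (hab : a < b) (n : ℕ) :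
    (∫ s in Set.Icc ((n : ℝ) * a) ((n : ℝ) * b),
      ∫ t in Set.Icc ((n : ℝ) * a) ((n : ℝ) * b),
        ∫ s' in Set.Icc ((n : ℝ) * a) ((n : ℝ) * b),
          ∫ t' in Set.Icc ((n : ℝ) * a) ((n : ℝ) * b),
            1 / ((|s - t| + 1) * (|t - t'| + 1) * (|t' - s'| + 1)))
    ≤ 8 * n * (b - a) * (Real.log (1 + n * (b - a))) ^ 3 := by
  set c : ℝ := n * a
  set d : ℝ := n * b
  have hdc : d - c = n * (b - a) := by ring
  have hcd : c ≤ d := by nlinarith [n.cast_nonneg (α := ℝ)]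
  set K := 2 * log (1 + (d - c))
  have hswap : ∀ t, ∫ s' in Icc c d, ∫ t' in Icc c d, (|t - t'| + 1)⁻¹ * (|t' - s'| + 1)⁻¹
      = ∫ t' in Icc c d, (|t - t'| + 1)⁻¹ * ∫ s' in Icc c d, (|t' - s'| + 1)⁻¹ := fun t => by
    rw [setIntegral_Icc_comm_of_continuous (by fun_prop (disch := intro; positivity))]
    simp only [integral_const_mul]
  simp only [one_div, mul_inv, mul_assoc, integral_const_mul, hswap]
  have h1 : ∀ t' ∈ Icc c d, ∫ s' in Icc c d, (|t' - s'| + 1)⁻¹ ≤ K :=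
    fun t' ht' => setIntegral_Icc_inv_abs_sub_add_one_le ht'
  have h2 : ∀ t ∈ Icc c d, ∫ t' in Icc c d, (|t - t'| + 1)⁻¹ *
      ∫ s' in Icc c d, (|t' - s'| + 1)⁻¹ ≤ K * K := fun t ht =>
    setIntegral_Icc_inv_abs_sub_add_one_mul_le ht (fun _ _ => by positivity) h1
  have h3 : ∀ s ∈ Icc c d, ∫ t in Icc c d, (|s - t| + 1)⁻¹ * ∫ t' in Icc c d, (|t - t'| + 1)⁻¹ *
      ∫ s' in Icc c d, (|t' - s'| + 1)⁻¹ ≤ K * (K * K) := fun s hs =>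
    setIntegral_Icc_inv_abs_sub_add_one_mul_le hs (fun _ _ => by positivity) h2
  calc _ ≤ ∫ _ in Icc c d, K * (K * K) := by
        refine integral_mono_of_nonneg (.of_forall fun s => by positivity) (integrableOn_const
          measure_Icc_lt_top.ne) ?_
        filter_upwards [ae_restrict_mem measurableSet_Icc] with s hs
        exact h3 s hs
    _ = _ := by
        rw [setIntegral_const, Real.volume_real_Icc_of_le hcd, smul_eq_mul]
        simp only [K, hdc]
        ring

theorem quadruple_integral_bound (a b : ℝ) (hab : a < b) (n : ℕ) (hn : 1 ≤ n) :
    (∫ s in Set.Icc ((n : ℝ) * a) ((n : ℝ) * b),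
      ∫ t in Set.Icc ((n : ℝ) * a) ((n : ℝ) * b),
        ∫ s' in Set.Icc ((n : ℝ) * a) ((n : ℝ) * b),
          ∫ t' in Set.Icc ((n : ℝ) * a) ((n : ℝ) * b),
            1 / ((|s - t| + 1) * (|t - t'| + 1) * (|t' - s'| + 1)))
    ≤ 8 * n * (b - a) * (Real.log (1 + n * (b - a))) ^ 3 :=
  quadruple_integral_bound_general a b hab n
end

section
/- Let q ≥ 0 be an even integer, let l, l' be integers with 0 ≤ l, l' ≤ q/2, and let d_1, d_2, d_3, d_4 be nonnegative integers satisfying d_1 + d_2 = q − 2l, d_3 + d_4 = 2l, d_1 + d_3 = q − 2l', d_2 + d_4 = 2l'. Then |b_{q−2l} · a_{2l} · b_{q−2l'} · a_{2l'}| · (q−2l)! (2l)! (q−2l')! (2l')! / (d_1! d_2! d_3! d_4!) ≤ 4^q. -/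
/-!
Put `k = q/2 - l` and `k' = q/2 - l'`, so that `k + l = k' + l' = m := q/2`. Since
`√(2π) ≥ 1`, `√(2/π) ≤ 1` and `|2l - 1| ≥ 1`, we have `|b_{2k} a_{2l}| ≤ 1/(2^m k! l!)` and
`|b_{2k'} a_{2l'}| ≤ 1/(2^m k'! l'!)`. The binomial bounds `(2k)! ≤ 2^{2k} d₁! d₂!` and
`(2l)! ≤ 2^{2l} d₃! d₄!` absorb the denominator, and the remaining
`(2k')! (2l')! ≤ (2m)! ≤ 4^m (m!)²` is paid for by `m! ≤ 2^m k! l!` and `m! ≤ 2^m k'! l'!`.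
Altogether the quantity is at most `16^m = 4^q`.
-/

set_option autoImplicit false

open Real

/-- `a_{2l} = √(2/π)·(−1)^{l+1}/(2^l·l!·(2l−1))`, indexed by `l`. -/
noncomputable def aCoef (l : ℕ) : ℝ :=
  Real.sqrt (2 / π) * (-1 : ℝ) ^ (l + 1) / (2 ^ l * (Nat.factorial l) * (2 * (l : ℝ) - 1))

/-- `b_{2k} = (−1)^k/(√(2π)·2^k·k!)`, indexed by `k`. -/
noncomputable def bCoef (k : ℕ) : ℝ :=
  (-1 : ℝ) ^ k / (Real.sqrt (2 * π) * 2 ^ k * (Nat.factorial k))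

open Nat

theorem Nat.factorial_add_le_two_pow_mul (i j : ℕ) : (i + j)! ≤ 2 ^ (i + j) * (i ! * j !) := by
  rw [← add_choose_mul_factorial_mul_factorial i j, mul_assoc]
  exact Nat.mul_le_mul_right _ (choose_le_two_pow _ _)

theorem Nat.factorial_mul_factorial_le_factorial_add (i j : ℕ) : i ! * j ! ≤ (i + j)! :=
  Nat.le_of_dvd (factorial_pos _) (factorial_mul_factorial_dvd_factorial_add i j)

theorem Nat.factorial_two_mul_mul_le {m k l k' l' : ℕ} (h : k + l = m) (h' : k' + l' = m) :
    (2 * k')! * (2 * l')! ≤ 16 ^ m * (k ! * l ! * (k' ! * l' !)) :=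
  calc (2 * k')! * (2 * l')! ≤ (m + m)! := by
        rw [show m + m = 2 * k' + 2 * l' by omega]
        exact factorial_mul_factorial_le_factorial_add _ _
    _ ≤ 2 ^ (m + m) * (m ! * m !) := factorial_add_le_two_pow_mul m m
    _ ≤ 2 ^ (m + m) * (2 ^ m * (k ! * l !) * (2 ^ m * (k' ! * l' !))) := by
        gcongr
        · exact h ▸ factorial_add_le_two_pow_mul k l
        · exact h' ▸ factorial_add_le_two_pow_mul k' l'
    _ = 16 ^ m * (k ! * l ! * (k' ! * l' !)) := by
        rw [show (16 : ℕ) = 2 ^ 4 by norm_num, ← pow_mul]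
        ring

theorem Nat.factorial_two_mul_prod_le {m k l k' l' d₁ d₂ d₃ d₄ : ℕ}
    (h : k + l = m) (h' : k' + l' = m) (h₁₂ : d₁ + d₂ = 2 * k) (h₃₄ : d₃ + d₄ = 2 * l) :
    (2 * k)! * (2 * l)! * (2 * k')! * (2 * l')!
      ≤ 2 ^ (m + m) * (d₁ ! * d₂ ! * d₃ ! * d₄ !) * (16 ^ m * (k ! * l ! * (k' ! * l' !))) :=
  calc (2 * k)! * (2 * l)! * (2 * k')! * (2 * l')!
      ≤ 2 ^ (d₁ + d₂) * (d₁ ! * d₂ !) * (2 ^ (d₃ + d₄) * (d₃ ! * d₄ !))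
        * (16 ^ m * (k ! * l ! * (k' ! * l' !))) := by
        rw [← h₁₂, ← h₃₄, mul_assoc _ (2 * k')!]
        gcongr ?_ * ?_ * ?_
        exacts [factorial_add_le_two_pow_mul _ _, factorial_add_le_two_pow_mul _ _,
          factorial_two_mul_mul_le h h']
    _ = 2 ^ (m + m) * (d₁ ! * d₂ ! * d₃ ! * d₄ !) * (16 ^ m * (k ! * l ! * (k' ! * l' !))) := by
        rw [show m + m = d₁ + d₂ + (d₃ + d₄) by omega, pow_add]
        ring

theorem abs_bCoef_le (k : ℕ) : |bCoef k| ≤ (2 ^ k * k ! : ℝ)⁻¹ := by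
  have hsqrt : 1 ≤ √(2 * π) := one_le_sqrt.mpr (by linarith [pi_gt_three])
  rw [bCoef, abs_div, abs_pow, abs_neg, abs_one, one_pow, one_div, abs_of_pos (by positivity)]
  have hpos : (0 : ℝ) < 2 ^ k * k ! := by positivity
  rw [mul_assoc]
  exact inv_anti₀ hpos (le_mul_of_one_le_left hpos.le hsqrt)

theorem abs_aCoef_le (l : ℕ) : |aCoef l| ≤ (2 ^ l * l ! : ℝ)⁻¹ := by
  have hsqrt : √(2 / π) ≤ 1 :=
    sqrt_le_one.mpr ((div_le_one pi_pos).mpr (by linarith [pi_gt_three]))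
  have hodd : 1 ≤ |2 * (l : ℝ) - 1| := by
    rcases Nat.eq_zero_or_pos l with rfl | hl
    · norm_num
    · rw [abs_of_nonneg] <;> linarith [show (1 : ℝ) ≤ l by exact_mod_cast hl]
  rw [aCoef, abs_div, abs_mul, abs_mul, abs_pow, abs_neg, abs_one, one_pow, mul_one,
    abs_of_nonneg (sqrt_nonneg _), abs_of_pos (by positivity : (0 : ℝ) < 2 ^ l * l !),
    div_eq_mul_inv]
  calc √(2 / π) * (2 ^ l * l ! * |2 * (l : ℝ) - 1|)⁻¹ ≤ 1 * (2 ^ l * l ! * 1 : ℝ)⁻¹ := by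
        gcongr
    _ = (2 ^ l * l ! : ℝ)⁻¹ := by simp

theorem abs_bCoef_mul_aCoef_le (k l : ℕ) :
    |bCoef k * aCoef l| ≤ (2 ^ (k + l) * (k ! * l !) : ℝ)⁻¹ :=
  calc |bCoef k * aCoef l| ≤ (2 ^ k * k ! : ℝ)⁻¹ * (2 ^ l * l ! : ℝ)⁻¹ := by
        rw [abs_mul]
        gcongr
        exacts [abs_bCoef_le k, abs_aCoef_le l]
    _ = (2 ^ (k + l) * (k ! * l !) : ℝ)⁻¹ := by
        rw [pow_add, ← mul_inv]
        ring_nf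

theorem coefficient_factorial_bound_general (q l l' d₁ d₂ d₃ d₄ : ℕ) (hq : Even q)
    (hl : l ≤ q / 2) (hl' : l' ≤ q / 2)
    (h12 : d₁ + d₂ = q - 2 * l) (h34 : d₃ + d₄ = 2 * l) :
    |bCoef (q / 2 - l) * aCoef l * bCoef (q / 2 - l') * aCoef l'| *
      (((q - 2 * l).factorial * (2 * l).factorial
          * (q - 2 * l').factorial * (2 * l').factorial : ℕ) : ℝ) /
      (((d₁.factorial * d₂.factorial * d₃.factorial * d₄.factorial : ℕ)) : ℝ)
    ≤ 4 ^ q := by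
  obtain ⟨m, rfl⟩ := hq
  set k := (m + m) / 2 - l
  set k' := (m + m) / 2 - l'
  have hk : k + l = m := by omega
  have hk' : k' + l' = m := by omega
  have hfact := factorial_two_mul_prod_le hk hk' (show d₁ + d₂ = 2 * k by omega) h34
  rw [show m + m - 2 * l = 2 * k by omega, show m + m - 2 * l' = 2 * k' by omega,
    show bCoef k * aCoef l * bCoef k' * aCoef l' = bCoef k * aCoef l * (bCoef k' * aCoef l')
      by ring, abs_mul]
  set D := (d₁ ! * d₂ ! * d₃ ! * d₄ !)
  have hD : (D : ℝ) ≠ 0 := by simp only [D]; positivity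
  calc _ ≤ (2 ^ m * (k ! * l !) : ℝ)⁻¹ * (2 ^ m * (k' ! * l' !) : ℝ)⁻¹
        * (2 ^ (m + m) * D * (16 ^ m * (k ! * l ! * (k' ! * l' !))) : ℕ) / D := by
        gcongr
        · exact hk ▸ abs_bCoef_mul_aCoef_le k l
        · exact hk' ▸ abs_bCoef_mul_aCoef_le k' l'
    _ = 16 ^ m := by
        push_cast
        rw [pow_add]
        field_simp
    _ = 4 ^ (m + m) := by
        rw [← two_mul, pow_mul]
        norm_num

theorem coefficient_factorial_bound (q l l' d₁ d₂ d₃ d₄ : ℕ) (hq : Even q)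
    (hl : l ≤ q / 2) (hl' : l' ≤ q / 2)
    (h12 : d₁ + d₂ = q - 2 * l) (h34 : d₃ + d₄ = 2 * l)
    (h13 : d₁ + d₃ = q - 2 * l') (h24 : d₂ + d₄ = 2 * l') :
    |bCoef (q / 2 - l) * aCoef l * bCoef (q / 2 - l') * aCoef l'| *
      (((q - 2 * l).factorial * (2 * l).factorial
          * (q - 2 * l').factorial * (2 * l').factorial : ℕ) : ℝ) /
      (((d₁.factorial * d₂.factorial * d₃.factorial * d₄.factorial : ℕ)) : ℝ)
    ≤ 4 ^ q :=
  coefficient_factorial_bound_general q l l' d₁ d₂ d₃ d₄ hq hl hl' h12 h34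
end

section
/- Let I ⊂ ℝ be a compact interval, let ξ_0, …, ξ_n be independent standard Gaussian random variables, and let p_0, …, p_n be real polynomials with deg p_j = j for each j. Set H(x) = Σ_{j=0}^n ξ_j p_j(x). Then almost surely H has no double root in I: with probability one there is no x ∈ I with H(x) = 0 and H'(x) = 0. -/
set_option autoImplicit false

open MeasureTheory ProbabilityTheory

/-! Since `deg p₀ = 0`, `p₀` is a nonzero constant `γ`, so `H = C (ξ₀ γ) + Q` with `Q` a function of
`ξ₁, …, ξₙ` alone. A double root `x` of `H` is a critical point of `Q` with `Q(x) = -ξ₀ γ`, and a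
polynomial has only finitely many critical values; so for each value of `(ξ₁, …, ξₙ)` only finitely
many values of `ξ₀` are bad. As `ξ₀` is independent of `(ξ₁, …, ξₙ)` and its law has a density,
Fubini gives probability zero. Compactness of `I` makes the bad set closed, hence measurable. -/

namespace Polynomial

variable {R : Type*} [CommRing R] [IsDomain R] [IsAddTorsionFree R]

lemma finite_image_eval_setOf_isRoot_derivative (q : R[X]) :
    ((fun x => q.eval x) '' {x | q.derivative.IsRoot x}).Finite := by
  by_cases hq : q.derivative = 0
  · refine (Set.finite_singleton (q.coeff 0)).subset ?_
    rintro _ ⟨x, -, rfl⟩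
    exact (congrArg (eval x) (eq_C_of_derivative_eq_zero hq)).trans eval_C
  · exact (finite_setOfPred_isRoot hq).image _

lemma finite_setOf_exists_isRoot_and_isRoot_derivative_C_mul_add (q : R[X]) {γ : R}
    (hγ : γ ≠ 0) :
    {t | ∃ x, (C (t * γ) + q).IsRoot x ∧ (C (t * γ) + q).derivative.IsRoot x}.Finite := by
  refine ((q.finite_image_eval_setOf_isRoot_derivative.image Neg.neg).preimage
    (mul_left_injective₀ hγ).injOn).subset ?_
  rintro t ⟨x, hroot, hcrit⟩
  simp only [IsRoot, eval_add, eval_C, derivative_add, derivative_C, zero_add] at hroot hcrit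
  exact ⟨q.eval x, ⟨x, hcrit, rfl⟩, (eq_neg_of_add_eq_zero_left hroot).symm⟩

end Polynomial

lemma IsClosed.setOf_exists_mem_of_isCompact {X Y : Type*} [TopologicalSpace X]
    [TopologicalSpace Y] {C : Set (X × Y)} (hC : IsClosed C) {K : Set Y} (hK : IsCompact K) :
    IsClosed {x | ∃ y ∈ K, (x, y) ∈ C} := by
  have := isCompact_iff_compactSpace.mp hK
  have hCK : IsClosed {q : X × K | (q.1, q.2.1) ∈ C} := hC.preimage (by fun_prop)
  convert isClosedMap_fst_of_compactSpace _ hCK using 1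
  ext x
  simp

namespace ProbabilityTheory

lemma iIndepFun.indepFun_succ_zero {Ω β : Type*} [MeasurableSpace Ω] [MeasurableSpace β]
    {μ : Measure Ω} {n : ℕ} {f : Fin (n + 1) → Ω → β} (h : iIndepFun f μ)
    (hf : ∀ i, Measurable (f i)) : IndepFun (fun ω (j : Fin n) => f j.succ ω) (f 0) μ :=
  (h.indepFun_finset {0}ᶜ {0} disjoint_compl_left hf).comp
    (φ := fun (v : ({0}ᶜ : Finset (Fin (n + 1))) → β) (j : Fin n) => v ⟨j.succ, by simp⟩)
    (ψ := fun (v : ({0} : Finset (Fin (n + 1))) → β) => v ⟨0, by simp⟩) (by fun_prop) (by fun_prop)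

lemma IndepFun.measure_prodMk_preimage_eq_zero {Ω E F : Type*} [MeasurableSpace Ω]
    [MeasurableSpace E] [MeasurableSpace F] {μ : Measure Ω} [IsFiniteMeasure μ]
    {X : Ω → E} {Y : Ω → F} (hXY : IndepFun X Y μ) (hX : Measurable X) (hY : Measurable Y)
    {A : Set (E × F)} (hA : MeasurableSet A) (hslice : ∀ x, μ.map Y (Prod.mk x ⁻¹' A) = 0) :
    μ ((fun ω => (X ω, Y ω)) ⁻¹' A) = 0 := by
  rw [← Measure.map_apply (hX.prodMk hY) hA,
    (indepFun_iff_map_prod_eq_prod_map_map hX.aemeasurable hY.aemeasurable).1 hXY,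
    Measure.prod_apply hA]
  simp [hslice]

end ProbabilityTheory

open Polynomial in
theorem no_double_root_as {Ω : Type*} [MeasureSpace Ω] [IsProbabilityMeasure (ℙ : Measure Ω)]
    (a b : ℝ) (n : ℕ) (ξ : ℕ → Ω → ℝ)
    (hmeas : ∀ j, Measurable (ξ j))
    (hindep : iIndepFun (fun j : Fin (n + 1) => ξ j) ℙ)
    (hgauss : ∀ j ≤ n, Measure.map (ξ j) ℙ = gaussianReal 0 1)
    (p : ℕ → Polynomial ℝ) (hdeg : ∀ j ≤ n, (p j).degree = (j : ℕ)) :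
    ℙ {ω | ∃ x ∈ Set.Icc a b,
        (∑ j ∈ Finset.range (n + 1), ξ j ω * (p j).eval x) = 0 ∧
        deriv (fun y => ∑ j ∈ Finset.range (n + 1), ξ j ω * (p j).eval y) x = 0} = 0 := by
  have hp0 : p 0 = C ((p 0).coeff 0) := eq_C_of_degree_eq_zero (by simpa using hdeg 0 n.zero_le)
  set γ := (p 0).coeff 0
  have hγ : γ ≠ 0 := fun h => by simpa [hp0, h] using hdeg 0 n.zero_le
  let P : (Fin n → ℝ) × ℝ → ℝ[X] := fun ct => C (ct.2 * γ) + ∑ j, ct.1 j • p j.succ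
  have hH : ∀ ω y, ∑ j ∈ Finset.range (n + 1), ξ j ω * (p j).eval y =
      (P (fun j => ξ j.succ ω, ξ 0 ω)).eval y := by
    intro ω y
    simp [P, Finset.sum_range, Fin.sum_univ_succ, hp0, eval_finsetSum]
  let A : Set ((Fin n → ℝ) × ℝ) :=
    {ct | ∃ x ∈ Set.Icc a b, (P ct).eval x = 0 ∧ (P ct).derivative.eval x = 0}
  have hdouble : IsClosed {q : ((Fin n → ℝ) × ℝ) × ℝ |
      (P q.1).eval q.2 = 0 ∧ (P q.1).derivative.eval q.2 = 0} := by
    refine (isClosed_eq ?_ continuous_const).inter (isClosed_eq ?_ continuous_const) <;>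
      simp only [P, eval_add, eval_C, derivative_add, derivative_C, derivative_sum,
        derivative_smul, eval_finsetSum, eval_smul, smul_eq_mul] <;>
      fun_prop
  refine measure_mono_null (t := (fun ω => ((fun j => ξ j.succ ω), ξ 0 ω)) ⁻¹' A)
    (fun ω ⟨x, hx, hroot, hcrit⟩ => ⟨x, hx, by simpa [hH] using hroot,
      by simpa [hH, Polynomial.deriv] using hcrit⟩) ?_
  refine (hindep.indepFun_succ_zero fun j => hmeas j)
    |>.measure_prodMk_preimage_eq_zero (by fun_prop) (hmeas 0)
      (hdouble.setOf_exists_mem_of_isCompact isCompact_Icc).measurableSet fun c => ?_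
  rw [Fin.val_zero, hgauss 0 n.zero_le]
  refine gaussianReal_absolutelyContinuous 0 one_ne_zero (Set.Finite.measure_zero ?_ _)
  exact (∑ j, c j • p j.succ).finite_setOf_exists_isRoot_and_isRoot_derivative_C_mul_add hγ
    |>.subset fun t ⟨x, _, hroot, hcrit⟩ => ⟨x, hroot, hcrit⟩
end
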